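/- Let v be a node of a labeled graph G. The set of standard decompositions of G equals the set of unions 𝓗 ∪ 𝓗′ where 𝓗 ranges over standard v-decompositions of G and 𝓗′ ranges over standard decompositions of G − Σ𝓗; moreover distinct pairs (𝓗, 𝓗′) yield distinct decompositions. -/
import Mathlib


/-- A labeled graph on node set `V` with edge set `E` is *standard* if all labels are
non-negative and labels are compatible with the edge relation. -/
def IsStandard {V : Type*} (E : Set (V × V)) (l : V → ℤ) : Prop :=
  (∀ v, 0 ≤ l v) ∧ ∀ e ∈ E, l e.1 ≤ l e.2

/-- A labeling is a *0-1 labeling* if every label is 0 or 1. -/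
def IsZeroOne {V : Type*} (l : V → ℤ) : Prop := ∀ v, l v = 0 ∨ l v = 1

/-- `H` is a *standard component* of `G` (same nodes and edges): `H` is a standard 0-1
graph, `G - H` is standard, and not all labels of `H` are zero. -/
def IsStdComp {V : Type*} (E : Set (V × V)) (G H : V → ℤ) : Prop :=
  IsStandard E H ∧ IsZeroOne H ∧ IsStandard E (G - H) ∧ ∃ v, H v ≠ 0

/-- A *standard decomposition* of `G`: a multiset of standard components of `G`
whose pointwise label sum equals the labeling of `G`. -/
def IsStdDecomp {V : Type*} (E : Set (V × V)) (G : V → ℤ) (D : Multiset (V → ℤ)) : Prop :=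
  (∀ H ∈ D, IsStdComp E G H) ∧ D.sum = G

/-- A *standard `v`-decomposition* of `G`: a multiset of standard components of `G`, each
giving `v` the label 1, such that `G - ΣH` is standard and the cardinality equals the
label of `v` in `G`. -/
def IsStdVDecomp {V : Type*} (E : Set (V × V)) (G : V → ℤ) (v : V)
    (D : Multiset (V → ℤ)) : Prop :=
  (∀ H ∈ D, IsStdComp E G H ∧ H v = 1) ∧ IsStandard E (G - D.sum) ∧ (D.card : ℤ) = G v

lemma std_add {V : Type*} (E : Set (V × V)) {a b : V → ℤ}
    (ha : IsStandard E a) (hb : IsStandard E b) : IsStandard E (a + b) :=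
  ⟨fun w => add_nonneg (ha.1 w) (hb.1 w), fun e he => add_le_add (ha.2 e he) (hb.2 e he)⟩

lemma std_sum {V : Type*} (E : Set (V × V)) (D : Multiset (V → ℤ))
    (h : ∀ H ∈ D, IsStandard E H) : IsStandard E D.sum := by
  induction D using Multiset.induction with
  | empty => exact ⟨fun w => by simp, fun e _ => by simp⟩
  | cons a s ih =>
    rw [Multiset.sum_cons]
    exact std_add E (h a (Multiset.mem_cons_self a s))
      (ih fun H hH => h H (Multiset.mem_cons_of_mem hH))

lemma sum_apply' {V : Type*} (M : Multiset (V → ℤ)) (v : V) :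
    M.sum v = (M.map (fun f => f v)).sum := by
  induction M using Multiset.induction with
  | empty => simp
  | cons a s ih => simp [ih]

lemma sum_apply_card {V : Type*} (M : Multiset (V → ℤ)) (v : V)
    (h : ∀ K ∈ M, K v = 1) : M.sum v = M.card := by
  induction M using Multiset.induction with
  | empty => simp
  | cons a s ih =>
    have := h a (Multiset.mem_cons_self a s)
    have h2 := ih fun K hK => h K (Multiset.mem_cons_of_mem hK)
    simp [this, h2]
    ring

lemma sum_apply_zero {V : Type*} (M : Multiset (V → ℤ)) (v : V)
    (h : ∀ K ∈ M, K v = 0) : M.sum v = 0 := by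
  induction M using Multiset.induction with
  | empty => simp
  | cons a s ih =>
    have := h a (Multiset.mem_cons_self a s)
    have h2 := ih fun K hK => h K (Multiset.mem_cons_of_mem hK)
    simp [this, h2]

lemma mem_zero_of_sum_zero {V : Type*} (M : Multiset (V → ℤ)) (v : V)
    (hnn : ∀ K ∈ M, 0 ≤ K v) (hz : M.sum v = 0) : ∀ K ∈ M, K v = 0 := by
  intro K hK
  have h1 : K v ≤ (M.map (fun f => f v)).sum := by
    apply Multiset.single_le_sum
    · intro x hx; obtain ⟨f, hf, rfl⟩ := Multiset.mem_map.mp hx; exact hnn f hf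
    · exact Multiset.mem_map_of_mem _ hK
  rw [← sum_apply', hz] at h1
  exact le_antisymm h1 (hnn K hK)

/-- elements of a standard decomposition of `G - H.sum` (for a `v`-decomposition `H`)
take value 0 at `v`. -/
lemma aux_zero_at_v {V : Type*} (E : Set (V × V)) (G : V → ℤ) (v : V)
    (H H' : Multiset (V → ℤ)) (hH : IsStdVDecomp E G v H)
    (hH' : IsStdDecomp E (G - H.sum) H') : ∀ K ∈ H', K v = 0 := by
  have hsum : H'.sum v = 0 := by
    have := congrFun hH'.2 v
    have hc : H.sum v = H.card := sum_apply_card H v (fun K hK => (hH.1 K hK).2)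
    simp only [Pi.sub_apply] at this
    rw [this, hc, hH.2.2]
    ring
  exact mem_zero_of_sum_zero H' v (fun K hK => ((hH'.1 K hK).1).1 v) hsum

/-- The standard decompositions of `G` are exactly the unions `H ∪ H'` of a standard
`v`-decomposition `H` of `G` and a standard decomposition `H'` of `G - ΣH`; moreover
distinct pairs yield distinct decompositions. -/
theorem decomp_eq_vDecomp_union {V : Type*} [Fintype V] (E : Set (V × V))
    (hE : ∀ v, (v, v) ∉ E) (G : V → ℤ) (v : V) :
    (∀ D : Multiset (V → ℤ), IsStdDecomp E G D ↔
        ∃ H H' : Multiset (V → ℤ), IsStdVDecomp E G v H ∧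
          IsStdDecomp E (G - H.sum) H' ∧ D = H + H') ∧
    (∀ H₁ H₁' H₂ H₂' : Multiset (V → ℤ),
        IsStdVDecomp E G v H₁ → IsStdDecomp E (G - H₁.sum) H₁' →
        IsStdVDecomp E G v H₂ → IsStdDecomp E (G - H₂.sum) H₂' →
        H₁ + H₁' = H₂ + H₂' → H₁ = H₂ ∧ H₁' = H₂') := by
  classical
  constructor
  · intro D
    constructor
    · rintro ⟨hcomp, hsum⟩
      set H : Multiset (V → ℤ) := D.filter (fun f => f v = 1) with hHdef
      set H' : Multiset (V → ℤ) := D.filter (fun f => ¬ f v = 1) with hH'def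
      have hDadd : H + H' = D := Multiset.filter_add_not _ D
      have hHmem : ∀ K ∈ H, IsStdComp E G K ∧ K v = 1 := by
        intro K hK
        rw [hHdef, Multiset.mem_filter] at hK
        exact ⟨hcomp K hK.1, hK.2⟩
      have hH'mem : ∀ K ∈ H', IsStdComp E G K ∧ K v = 0 := by
        intro K hK
        rw [hH'def, Multiset.mem_filter] at hK
        have hc := hcomp K hK.1
        rcases hc.2.1 v with h0 | h1
        · exact ⟨hc, h0⟩
        · exact absurd h1 hK.2
      have hGsum : G = H.sum + H'.sum := by
        rw [← Multiset.sum_add, hDadd, hsum]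
      have hsub : G - H.sum = H'.sum := by rw [hGsum]; funext w; simp
      have hH'std : IsStandard E H'.sum :=
        std_sum E H' (fun K hK => (hH'mem K hK).1.1)
      have hcard : (H.card : ℤ) = G v := by
        have h1 : H.sum v = H.card := sum_apply_card H v (fun K hK => (hHmem K hK).2)
        have h2 : H'.sum v = 0 := sum_apply_zero H' v (fun K hK => (hH'mem K hK).2)
        have := congrFun hGsum v
        simp only [Pi.add_apply] at this
        rw [this, h1, h2]; ring
      refine ⟨H, H', ⟨hHmem, by rw [hsub]; exact hH'std, hcard⟩, ⟨?_, hsub.symm⟩, hDadd.symm⟩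
      intro K hK
      obtain ⟨⟨hKstd, hK01, _, hKne⟩, _⟩ := hH'mem K hK
      refine ⟨hKstd, hK01, ?_, hKne⟩
      have herase : G - H.sum - K = (H'.erase K).sum := by
        rw [hsub]
        have := Multiset.cons_erase hK
        conv_lhs => rw [← this]
        rw [Multiset.sum_cons]
        funext w; simp
      rw [herase]
      exact std_sum E _ (fun L hL => (hH'mem L (Multiset.mem_of_mem_erase hL)).1.1)
    · rintro ⟨H, H', hH, hH', rfl⟩
      constructor
      · intro K hK
        rcases Multiset.mem_add.mp hK with h | h
        · exact (hH.1 K h).1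
        · obtain ⟨hKstd, hK01, hKsub, hKne⟩ := hH'.1 K h
          refine ⟨hKstd, hK01, ?_, hKne⟩
          have : G - K = H.sum + (G - H.sum - K) := by funext w; simp; ring
          rw [this]
          exact std_add E (std_sum E H (fun L hL => ((hH.1 L hL).1).1)) hKsub
      · rw [Multiset.sum_add, hH'.2]
        funext w; simp
  · intro H₁ H₁' H₂ H₂' h₁ h₁' h₂ h₂' heq
    have key : ∀ (H H' : Multiset (V → ℤ)), IsStdVDecomp E G v H →
        IsStdDecomp E (G - H.sum) H' →
        (H + H').filter (fun f => f v = 1) = H := by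
      intro H H' hH hH'
      rw [Multiset.filter_add,
        Multiset.filter_eq_self.mpr (fun K hK => (hH.1 K hK).2),
        Multiset.filter_eq_nil.mpr (fun K hK h1 => by
          have := aux_zero_at_v E G v H H' hH hH' K hK
          rw [this] at h1; exact one_ne_zero h1.symm)]
      simp
    have hH12 : H₁ = H₂ := by
      rw [← key H₁ H₁' h₁ h₁', ← key H₂ H₂' h₂ h₂', heq]
    refine ⟨hH12, ?_⟩
    rw [hH12] at heq
    exact add_left_cancel heq
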